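/- arXiv:2311.11323 — 2 statements merged into one kernel-verified Lean document; each statement's English description precedes it below -/
import Mathlib

section
/- For n = 2^d and d ≥ 1, the girth of FDSC_n is 3, i.e., FDSC_n contains a cycle of length 3 and no shorter cycle. -/
open scoped Classical

namespace FDSC

/-- Vertices of `FDSC_n` with `n = 2^d`: binary strings of length `2^d`. -/
abbrev V (d : ℕ) : Type := Fin (2 ^ d) → Bool

/-- Bit `i` of a vertex (out-of-range bits are `false`). -/
def get {d : ℕ} (u : V d) (i : ℕ) : Bool :=
  if h : i < 2 ^ d then u ⟨i, h⟩ else false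

def ofFun {d : ℕ} (f : ℕ → Bool) : V d := fun i => f i

/-- Flip bit `i`. -/
def flip {d : ℕ} (i : ℕ) (u : V d) : V d :=
  ofFun (fun j => if j = i then !(get u j) else get u j)

/-- The two initial blocks of length `L` coincide (`m₁ = m₂`). -/
def sameHalves {d : ℕ} (L : ℕ) (u : V d) : Prop :=
  ∀ i < L, get u i = get u (i + L)

/-- Swap the two initial blocks of length `L` (`m₂ m₁ m₃`). -/
def swapHalves {d : ℕ} (L : ℕ) (u : V d) : V d :=
  ofFun (fun i => if i < L then get u (i + L)
    else if i < 2 * L then get u (i - L) else get u i)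

/-- Complement the two initial blocks of length `L` (`m̄₁ m̄₂ m₃`). -/
def complHalves {d : ℕ} (L : ℕ) (u : V d) : V d :=
  ofFun (fun i => if i < 2 * L then !(get u i) else get u i)

/-- Divide-and-swap neighbor for block length `L`. -/
noncomputable def dsNeighbor {d : ℕ} (L : ℕ) (u : V d) : V d :=
  if sameHalves L u then complHalves L u else swapHalves L u

/-- Adjacency in `FDSC_n`: the `e(1)`-edge (flip first bit), the `e(f)`-edge
(flip second bit), and the `e(2n/2^k)`-edges for `1 ≤ k ≤ d`. -/
def PreAdj {d : ℕ} (u v : V d) : Prop :=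
  u ≠ v ∧ (v = flip 0 u ∨ v = flip 1 u ∨
    ∃ k, 1 ≤ k ∧ k ≤ d ∧ v = dsNeighbor (2 ^ (d - k)) u)

/-- The folded divide-and-swap cube `FDSC_n`, `n = 2^d`. -/
noncomputable def graph (d : ℕ) : SimpleGraph (V d) where
  Adj u v := PreAdj u v ∨ PreAdj v u
  symm := ⟨fun _ _ h => h.symm⟩
  loopless := ⟨fun u h => by
    rcases h with h | h <;> exact h.1 rfl⟩

/-- Module addresses: binary strings of length `n/2 = 2^(d-1)`. -/
abbrev W (d : ℕ) : Type := Fin (2 ^ (d - 1)) → Bool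

def getW {d : ℕ} (B : W d) (i : ℕ) : Bool :=
  if h : i < 2 ^ (d - 1) then B ⟨i, h⟩ else false

/-- The vertex `A B` (inside-address `A`, module address `B`). -/
def concat {d : ℕ} (A B : W d) : V d :=
  ofFun (fun i => if i < 2 ^ (d - 1) then getW A i else getW B (i - 2 ^ (d - 1)))

/-- The module address of a vertex (its second half). -/
def secondHalf {d : ℕ} (u : V d) : W d :=
  fun i => get u ((i : ℕ) + 2 ^ (d - 1))

/-- Bitwise complement of a module address. -/
def complW {d : ℕ} (B : W d) : W d := fun i => !(B i)

/-- The external neighbor of a vertex: the `e(n)`-edge endpoint (`k = 1`). -/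
noncomputable def extNeighbor {d : ℕ} (u : V d) : V d :=
  dsNeighbor (2 ^ (d - 1)) u

/-- The star `K_{1,m}` with center `0`. -/
def star (m : ℕ) : SimpleGraph (Fin (m + 1)) where
  Adj i j := (i = 0 ∧ j ≠ 0) ∨ (j = 0 ∧ i ≠ 0)
  symm := ⟨fun _ _ h => h.symm⟩
  loopless := ⟨fun i h => by
    rcases h with ⟨h1, h2⟩ | ⟨h1, h2⟩ <;> exact h2 h1⟩

/-- Deleting the vertex set `R` disconnects the graph or leaves a trivial graph. -/
def Disconnects {α : Type*} (G : SimpleGraph α) (R : Set α) : Prop :=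
  ¬ (G.induce Rᶜ).Connected ∨ Rᶜ.Subsingleton

/-- `H`-structure connectivity: minimum number of subgraphs of `G`, each
isomorphic to `H`, whose vertex deletion disconnects `G` or leaves a trivial graph. -/
noncomputable def structConn {α β : Type*} (G : SimpleGraph α) (H : SimpleGraph β) : ℕ :=
  sInf { k | ∃ F : Finset G.Subgraph, F.card = k ∧
    (∀ S ∈ F, Nonempty (S.coe ≃g H)) ∧
    Disconnects G (⋃ S ∈ F, S.verts) }

/-- `H`-substructure connectivity: members are isomorphic to connected subgraphs of `H`. -/
noncomputable def substructConn {α β : Type*} (G : SimpleGraph α) (H : SimpleGraph β) : ℕ :=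
  sInf { k | ∃ F : Finset G.Subgraph, F.card = k ∧
    (∀ S ∈ F, S.coe.Connected ∧ ∃ H' : H.Subgraph, Nonempty (S.coe ≃g H'.coe)) ∧
    Disconnects G (⋃ S ∈ F, S.verts) }


section Girth
variable (d : ℕ)

def x0 : V d := fun _ => false

lemma two_le (hd : 1 ≤ d) : 2 ≤ 2 ^ d := by
  calc 2 = 2^1 := rfl
  _ ≤ 2^d := Nat.pow_le_pow_right (by norm_num) hd

lemma get_x0 (i : ℕ) : get (x0 d) i = false := by
  unfold get x0; split <;> rfl

lemma x1_apply (i : Fin (2^d)) : flip 0 (x0 d) i = decide ((i:ℕ) = 0) := by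
  simp only [flip, ofFun, get_x0]
  split <;> simp_all

lemma x2_apply (i : Fin (2^d)) : flip 1 (x0 d) i = decide ((i:ℕ) = 1) := by
  simp only [flip, ofFun, get_x0]
  split <;> simp_all

lemma get_x1 (i : ℕ) : get (flip 0 (x0 d)) i = decide (i = 0) := by
  unfold get
  split
  · rw [x1_apply]
  · have h1 := Nat.one_le_two_pow (n := d)
    simp; omega

theorem tri (hd : 1 ≤ d) : flip 1 (x0 d) = dsNeighbor (2 ^ (d - d)) (flip 0 (x0 d)) := by
  have h2 := two_le d hd
  rw [Nat.sub_self, pow_zero]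
  rw [dsNeighbor, if_neg]
  · funext i
    rw [x2_apply]
    simp only [swapHalves, ofFun]
    rcases Nat.lt_or_ge (i:ℕ) 1 with h | h
    · rw [if_pos h, get_x1]
      interval_cases h' : (i : ℕ) <;> simp
    · rw [if_neg (by omega)]
      rcases Nat.lt_or_ge (i:ℕ) 2 with h' | h'
      · have h1 : (i:ℕ) - 1 = 0 := by omega
        have h2' : (i:ℕ) = 1 := by omega
        rw [if_pos (by omega), get_x1, h1, h2']
        simp
      · rw [if_neg (by omega), get_x1]
        have h1 := Nat.one_le_two_pow (n := d)
        simp only [decide_eq_decide]; omega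
  · intro hsame
    have := hsame 0 (by norm_num)
    rw [get_x1, get_x1] at this
    simp at this

lemma ne01 (hd : 1 ≤ d) : x0 d ≠ flip 0 (x0 d) := by
  intro h
  have := congrFun h ⟨0, by have := two_le d hd; omega⟩
  rw [x1_apply] at this
  simp [x0] at this

lemma ne02 (hd : 1 ≤ d) : x0 d ≠ flip 1 (x0 d) := by
  intro h
  have := congrFun h ⟨1, by have := two_le d hd; omega⟩
  rw [x2_apply] at this
  simp [x0] at this

lemma ne12 (hd : 1 ≤ d) : flip 0 (x0 d) ≠ flip 1 (x0 d) := by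
  intro h
  have := congrFun h ⟨0, by have := two_le d hd; omega⟩
  rw [x1_apply, x2_apply] at this
  simp at this

lemma h01 (hd : 1 ≤ d) : (graph d).Adj (x0 d) (flip 0 (x0 d)) :=
  Or.inl ⟨ne01 d hd, Or.inl rfl⟩

lemma h20 (hd : 1 ≤ d) : (graph d).Adj (flip 1 (x0 d)) (x0 d) :=
  Or.inr ⟨ne02 d hd, Or.inr (Or.inl rfl)⟩

lemma h12 (hd : 1 ≤ d) : (graph d).Adj (flip 0 (x0 d)) (flip 1 (x0 d)) :=
  Or.inl ⟨ne12 d hd, Or.inr (Or.inr ⟨d, hd, le_refl d, tri d hd⟩)⟩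

end Girth

/-- the girth of `FDSC_n` is `3`. -/
theorem stmt2 (d : ℕ) (hd : 1 ≤ d) : (graph d).girth = 3 := by
  set w : (graph d).Walk (x0 d) (x0 d) :=
    .cons (h01 d hd) (.cons (h12 d hd) (.cons (h20 d hd) .nil)) with hw
  have hcyc : w.IsCycle := by
    have n01 := ne01 d hd
    have n02 := ne02 d hd
    have n12 := ne12 d hd
    simp [hw, SimpleGraph.Walk.isCycle_def, SimpleGraph.Walk.isTrail_def,
      List.Nodup, n01, n02, n12, Ne.symm, Sym2.eq_iff]
  have hlen : w.length = 3 := rfl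
  have hle : (graph d).egirth ≤ (3 : ℕ∞) := by
    have h3 : ((w.length : ℕ) : ℕ∞) = 3 := by rw [hlen]; rfl
    rw [← h3]
    unfold SimpleGraph.egirth
    exact le_trans (iInf_le _ (x0 d)) (le_trans (iInf_le _ w) (iInf_le _ hcyc))
  have heq : (graph d).egirth = 3 := le_antisymm hle SimpleGraph.three_le_egirth
  rw [SimpleGraph.girth, heq]
  rfl

end FDSC
end

section
/- Let B_i and B_j be addresses of two distinct modules G_i and G_j of FDSC_n. If B_j = B̄_i, then G_i and G_j are joined by exactly two cross edges, namely (B_i B_i, B_j B_j) and (B_j B_i, B_i B_j); otherwise they are joined by exactly one cross edge, namely (B_j B_i, B_i B_j). -/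
open scoped Classical

namespace FDSC

section aux

variable {d : ℕ}

lemma get_ofFun (f : ℕ → Bool) (i : ℕ) :
    get (ofFun f : V d) i = if i < 2 ^ d then f i else false := by
  simp [get, ofFun]

lemma ext_get {u v : V d} (h : ∀ i, get u i = get v i) : u = v := by
  funext i
  have := h i
  simpa [get, i.isLt] using this

lemma getW_coe (B : W d) (j : Fin (2 ^ (d - 1))) : getW B j = B j := by
  simp [getW]

lemma extW {A B : W d} (h : ∀ i < 2 ^ (d - 1), getW A i = getW B i) : A = B := by
  funext j
  have := h j j.isLt
  simpa [getW, j.isLt] using this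

lemma Lsum (hd : 1 ≤ d) : 2 ^ (d - 1) + 2 ^ (d - 1) = 2 ^ d := by
  have h : d - 1 + 1 = d := Nat.succ_pred_eq_of_pos hd
  calc 2 ^ (d - 1) + 2 ^ (d - 1) = 2 ^ (d - 1) * 2 := by ring
    _ = 2 ^ (d - 1 + 1) := (pow_succ 2 (d - 1)).symm
    _ = 2 ^ d := by rw [h]

lemma get_concat_lt (A B : W d) {i : ℕ} (h : i < 2 ^ (d - 1)) :
    get (concat A B : V d) i = getW A i := by
  have h2 : i < 2 ^ d := lt_of_lt_of_le h (Nat.pow_le_pow_right (by norm_num) (Nat.sub_le d 1))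
  simp [concat, get_ofFun, h, h2]

lemma get_concat_ge (hd : 1 ≤ d) (A B : W d) {i : ℕ} (h1 : 2 ^ (d - 1) ≤ i) (h2 : i < 2 ^ d) :
    get (concat A B : V d) i = getW B (i - 2 ^ (d - 1)) := by
  simp [concat, get_ofFun, h2, Nat.not_lt.mpr h1]

lemma get_concat_add (hd : 1 ≤ d) (A B : W d) {i : ℕ} (h : i < 2 ^ (d - 1)) :
    get (concat A B : V d) (i + 2 ^ (d - 1)) = getW B i := by
  have h2 : i + 2 ^ (d - 1) < 2 ^ d := by
    rw [← Lsum hd]; omega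
  rw [get_concat_ge hd A B (Nat.le_add_left _ _) h2]
  congr 1; omega

lemma secondHalf_concat (hd : 1 ≤ d) (A B : W d) : secondHalf (concat A B : V d) = B := by
  funext j
  show get (concat A B : V d) ((j : ℕ) + 2 ^ (d - 1)) = B j
  rw [get_concat_add hd A B j.isLt, getW_coe]

lemma sameHalves_concat (hd : 1 ≤ d) (A B : W d) :
    sameHalves (2 ^ (d - 1)) (concat A B : V d) ↔ A = B := by
  constructor
  · intro h
    refine extW fun i hi => ?_
    have := h i hi
    rwa [get_concat_lt A B hi, get_concat_add hd A B hi] at this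
  · rintro rfl i hi
    rw [get_concat_lt A A hi, get_concat_add hd A A hi]

lemma complHalves_concat (hd : 1 ≤ d) (A B : W d) :
    complHalves (2 ^ (d - 1)) (concat A B : V d) = concat (complW A) (complW B) := by
  have hL := Lsum hd
  refine ext_get fun i => ?_
  rw [complHalves, get_ofFun]
  by_cases h2 : i < 2 ^ d
  · have h2L : i < 2 * 2 ^ (d - 1) := by omega
    rw [if_pos h2, if_pos h2L]
    by_cases h1 : i < 2 ^ (d - 1)
    · rw [get_concat_lt A B h1, get_concat_lt (complW A) (complW B) h1]
      have h1' := h1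
      simp [getW, complW, h1]
    · have hge := Nat.not_lt.mp h1
      rw [get_concat_ge hd A B hge h2, get_concat_ge hd (complW A) (complW B) hge h2]
      have hlt : i - 2 ^ (d - 1) < 2 ^ (d - 1) := by omega
      simp [getW, complW, hlt]
  · rw [if_neg h2]
    simp [get, h2]

lemma swapHalves_concat (hd : 1 ≤ d) (A B : W d) :
    swapHalves (2 ^ (d - 1)) (concat A B : V d) = concat B A := by
  have hL := Lsum hd
  refine ext_get fun i => ?_
  rw [swapHalves, get_ofFun]
  by_cases h2 : i < 2 ^ d
  · rw [if_pos h2]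
    by_cases h1 : i < 2 ^ (d - 1)
    · rw [if_pos h1, get_concat_add hd A B h1, get_concat_lt B A h1]
    · have hge := Nat.not_lt.mp h1
      have h2L : i < 2 * 2 ^ (d - 1) := by omega
      rw [if_neg h1, if_pos h2L, get_concat_ge hd B A hge h2]
      have hlt : i - 2 ^ (d - 1) < 2 ^ (d - 1) := by omega
      rw [get_concat_lt A B hlt]
  · rw [if_neg h2]
    simp [get, h2]

lemma extNeighbor_concat_same (hd : 1 ≤ d) (A : W d) :
    extNeighbor (concat A A : V d) = concat (complW A) (complW A) := by
  rw [extNeighbor, dsNeighbor, if_pos ((sameHalves_concat hd A A).mpr rfl),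
    complHalves_concat hd]

lemma extNeighbor_concat_ne (hd : 1 ≤ d) {A B : W d} (h : A ≠ B) :
    extNeighbor (concat A B : V d) = concat B A := by
  rw [extNeighbor, dsNeighbor, if_neg (fun hs => h ((sameHalves_concat hd A B).mp hs)),
    swapHalves_concat hd]

/-- First half of a vertex, as a module address. -/
def firstHalf (u : V d) : W d := fun j => get u j

lemma concat_halves (hd : 1 ≤ d) (u : V d) :
    concat (firstHalf u) (secondHalf u) = u := by
  have hL := Lsum hd
  refine ext_get fun i => ?_
  by_cases h2 : i < 2 ^ d
  · by_cases h1 : i < 2 ^ (d - 1)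
    · rw [get_concat_lt _ _ h1]
      simp [getW, firstHalf, h1]
    · have hge := Nat.not_lt.mp h1
      rw [get_concat_ge hd _ _ hge h2]
      have hlt : i - 2 ^ (d - 1) < 2 ^ (d - 1) := by omega
      have : i - 2 ^ (d - 1) + 2 ^ (d - 1) = i := by omega
      simp [getW, secondHalf, hlt, this]
  · rw [concat, get_ofFun, if_neg h2]
    simp [get, h2]

end aux

/-- two distinct modules `G_i`, `G_j` are joined by exactly two cross
edges `(B_iB_i, B_jB_j)`, `(B_jB_i, B_iB_j)` if `B_j = B̄_i`, and by exactly one cross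
edge `(B_jB_i, B_iB_j)` otherwise. -/
theorem stmt4 (d : ℕ) (hd : 2 ≤ d) (Bi Bj : W d) (hne : Bi ≠ Bj) :
    (Bj = complW Bi →
      {u : V d | secondHalf u = Bi ∧ secondHalf (extNeighbor u) = Bj}
        = {concat Bi Bi, concat Bj Bi} ∧
      extNeighbor (concat Bi Bi) = concat Bj Bj ∧
      extNeighbor (concat Bj Bi) = concat Bi Bj) ∧
    (Bj ≠ complW Bi →
      {u : V d | secondHalf u = Bi ∧ secondHalf (extNeighbor u) = Bj}
        = {concat Bj Bi} ∧
      extNeighbor (concat Bj Bi) = concat Bi Bj) := by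
  have hd1 : 1 ≤ d := le_trans one_le_two hd
  have key : ∀ u : V d, (secondHalf u = Bi ∧ secondHalf (extNeighbor u) = Bj) ↔
      ((Bj = complW Bi ∧ u = concat Bi Bi) ∨ u = concat Bj Bi) := by
    intro u
    constructor
    · rintro ⟨h1, h2⟩
      have hu : u = concat (firstHalf u) Bi := by rw [← h1, concat_halves hd1]
      by_cases hA : firstHalf u = Bi
      · left
        rw [hu, hA] at h2 ⊢
        rw [extNeighbor_concat_same hd1, secondHalf_concat hd1] at h2
        exact ⟨h2.symm, rfl⟩
      · right
        rw [hu] at h2 ⊢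
        rw [extNeighbor_concat_ne hd1 hA, secondHalf_concat hd1] at h2
        rw [h2]
    · rintro (⟨hcompl, rfl⟩ | rfl)
      · refine ⟨secondHalf_concat hd1 _ _, ?_⟩
        rw [extNeighbor_concat_same hd1, secondHalf_concat hd1, hcompl]
      · refine ⟨secondHalf_concat hd1 _ _, ?_⟩
        rw [extNeighbor_concat_ne hd1 (Ne.symm hne), secondHalf_concat hd1]
  constructor
  · intro hBj
    refine ⟨?_, ?_, ?_⟩
    · ext u
      simp only [Set.mem_setOf_eq, Set.mem_insert_iff, Set.mem_singleton_iff, key u]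
      constructor
      · rintro (⟨_, h⟩ | h)
        exacts [Or.inl h, Or.inr h]
      · rintro (h | h)
        exacts [Or.inl ⟨hBj, h⟩, Or.inr h]
    · rw [extNeighbor_concat_same hd1, hBj]
    · rw [extNeighbor_concat_ne hd1 (Ne.symm hne)]
  · intro hBj
    refine ⟨?_, ?_⟩
    · ext u
      simp only [Set.mem_setOf_eq, Set.mem_singleton_iff, key u]
      constructor
      · rintro (⟨h, _⟩ | h)
        exacts [absurd h hBj, h]
      · intro h
        exact Or.inr h
    · rw [extNeighbor_concat_ne hd1 (Ne.symm hne)]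

end FDSC
end
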